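/- The functions x₁(t) = e^{-t}cos t and x₂(t) = sin t are solutions of ẍ(t) + ((2sin²t + cos t sin t)/(1 + cos t sin t))ẋ(t) + ((sin²t - cos t sin t)/(1 + cos t sin t))x(t) = 0, and ∫₀^π (2sin²t + cos t sin t)/(1 + cos t sin t) dt > 0, yet the equation is not exponentially stable since the solution x₂(t) = sin t does not tend to zero. -/

import Mathlib

/-! The damping coefficient is `1 - (log (1 + cos t sin t))'`, so its integral over a period is
exactly `π`. That `e^{-t} cos t` and `sin t` are solutions needs only `sin² + cos² = 1` once the
denominator `1 + cos t sin t = 1 + (sin 2t)/2 ≥ 1/2` is cleared, and `sin` is periodic and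
nonconstant, so it has no limit at infinity. -/

open Real Filter

theorem Function.Periodic.eq_of_tendsto_atTop {X : Type*} [TopologicalSpace X] [T2Space X]
    {f : ℝ → X} {c : ℝ} {l : X} (hf : f.Periodic c)
    (hc : 0 < c) (hl : Tendsto f atTop (nhds l)) (x : ℝ) : f x = l := by
  have hseq : Tendsto (fun n : ℕ => x + n * c) atTop atTop :=
    tendsto_atTop_add_const_left _ _ (tendsto_natCast_atTop_atTop.atTop_mul_const hc)
  have hconst : Tendsto (fun _ : ℕ => f x) atTop (nhds l) := by
    simpa only [Function.comp_def, (hf.nat_mul _) x] using hl.comp hseq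
  exact tendsto_nhds_unique tendsto_const_nhds hconst

theorem Real.not_tendsto_sin_atTop : ¬ Tendsto sin atTop (nhds 0) := fun h => by
  simpa using sin_periodic.eq_of_tendsto_atTop two_pi_pos h (π / 2)

theorem deriv_deriv_of_hasDerivAt {𝕜 F : Type*} [NontriviallyNormedField 𝕜]
    [NormedAddCommGroup F] [NormedSpace 𝕜 F] {f f' f'' : 𝕜 → F} (hf : ∀ t, HasDerivAt f (f' t) t)
    (hf' : ∀ t, HasDerivAt f' (f'' t) t) (t : 𝕜) : deriv (deriv f) t = f'' t := by
  rw [funext fun t => (hf t).deriv]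
  exact (hf' t).deriv

namespace Example4

theorem one_add_cos_mul_sin_pos (t : ℝ) : 0 < 1 + cos t * sin t := by
  nlinarith [sq_nonneg (sin t + cos t), sin_sq_add_cos_sq t]

noncomputable def dampingCoeff (t : ℝ) : ℝ :=
  (2 * sin t ^ 2 + cos t * sin t) / (1 + cos t * sin t)

noncomputable def stiffnessCoeff (t : ℝ) : ℝ :=
  (sin t ^ 2 - cos t * sin t) / (1 + cos t * sin t)

theorem continuous_dampingCoeff : Continuous dampingCoeff :=
  Continuous.div (by fun_prop) (by fun_prop) fun t => (one_add_cos_mul_sin_pos t).ne'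

theorem hasDerivAt_sub_log_one_add_cos_mul_sin (t : ℝ) :
    HasDerivAt (fun t => t - log (1 + cos t * sin t)) (dampingCoeff t) t := by
  have hD : HasDerivAt (fun t => 1 + cos t * sin t) (cos t ^ 2 - sin t ^ 2) t :=
    (((hasDerivAt_cos t).mul (hasDerivAt_sin t)).const_add 1).congr_deriv (by ring)
  have hne := (one_add_cos_mul_sin_pos t).ne'
  refine ((hasDerivAt_id t).sub (hD.log hne)).congr_deriv ?_
  rw [dampingCoeff, sub_eq_iff_eq_add, ← add_div, eq_div_iff hne]
  linear_combination -sin_sq_add_cos_sq t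

theorem integral_dampingCoeff : ∫ t in (0 : ℝ)..π, dampingCoeff t = π := by
  rw [intervalIntegral.integral_eq_sub_of_hasDerivAt
    (fun t _ => hasDerivAt_sub_log_one_add_cos_mul_sin t)
    (continuous_dampingCoeff.intervalIntegrable 0 π)]
  simp

theorem add_dampingCoeff_mul_add_stiffnessCoeff_mul_eq_zero_iff (t x'' x' x : ℝ) :
    x'' + dampingCoeff t * x' + stiffnessCoeff t * x = 0 ↔
      x'' * (1 + cos t * sin t) + (2 * sin t ^ 2 + cos t * sin t) * x'
        + (sin t ^ 2 - cos t * sin t) * x = 0 := by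
  rw [dampingCoeff, stiffnessCoeff, div_mul_eq_mul_div, div_mul_eq_mul_div, add_assoc, ← add_div,
    add_div_eq_mul_add_div _ _ (one_add_cos_mul_sin_pos t).ne', div_eq_zero_iff,
    or_iff_left (one_add_cos_mul_sin_pos t).ne', add_assoc]

theorem hasDerivAt_exp_neg_mul_cos (t : ℝ) :
    HasDerivAt (fun t => exp (-t) * cos t) (-exp (-t) * (cos t + sin t)) t :=
  ((hasDerivAt_neg t).exp.mul (hasDerivAt_cos t)).congr_deriv (by ring)

theorem hasDerivAt_neg_exp_neg_mul_cos_add_sin (t : ℝ) :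
    HasDerivAt (fun t => -exp (-t) * (cos t + sin t)) (2 * exp (-t) * sin t) t :=
  ((hasDerivAt_neg t).exp.neg.mul ((hasDerivAt_cos t).add (hasDerivAt_sin t))).congr_deriv
    (by simp only [Pi.add_apply, Pi.neg_apply]; ring)

theorem exp_neg_mul_cos_solves (t : ℝ) :
    deriv (deriv fun t => exp (-t) * cos t) t
      + dampingCoeff t * deriv (fun t => exp (-t) * cos t) t
      + stiffnessCoeff t * (exp (-t) * cos t) = 0 := by
  rw [deriv_deriv_of_hasDerivAt hasDerivAt_exp_neg_mul_cos hasDerivAt_neg_exp_neg_mul_cos_add_sin,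
    (hasDerivAt_exp_neg_mul_cos t).deriv, add_dampingCoeff_mul_add_stiffnessCoeff_mul_eq_zero_iff]
  linear_combination (-2 * exp (-t) * sin t) * sin_sq_add_cos_sq t

theorem sin_solves (t : ℝ) :
    deriv (deriv sin) t + dampingCoeff t * deriv sin t + stiffnessCoeff t * sin t = 0 := by
  rw [deriv_deriv_of_hasDerivAt hasDerivAt_sin hasDerivAt_cos, Real.deriv_sin,
    add_dampingCoeff_mul_add_stiffnessCoeff_mul_eq_zero_iff]
  linear_combination sin t * sin_sq_add_cos_sq t

end Example4

open Example4 in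
theorem stmt17 (a b x₁ x₂ : ℝ → ℝ)
    (ha : ∀ t, a t = (2 * Real.sin t ^ 2 + Real.cos t * Real.sin t)
        / (1 + Real.cos t * Real.sin t))
    (hb : ∀ t, b t = (Real.sin t ^ 2 - Real.cos t * Real.sin t)
        / (1 + Real.cos t * Real.sin t))
    (hx₁ : ∀ t, x₁ t = Real.exp (-t) * Real.cos t)
    (hx₂ : ∀ t, x₂ t = Real.sin t) :
    (∀ t, deriv (deriv x₁) t + a t * deriv x₁ t + b t * x₁ t = 0) ∧
    (∀ t, deriv (deriv x₂) t + a t * deriv x₂ t + b t * x₂ t = 0) ∧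
    (0 < ∫ t in (0:ℝ)..Real.pi, a t) ∧
    ¬ Tendsto x₂ atTop (nhds 0) := by
  obtain rfl : a = dampingCoeff := funext ha
  obtain rfl : b = stiffnessCoeff := funext hb
  obtain rfl : x₁ = fun t => exp (-t) * cos t := funext hx₁
  obtain rfl : x₂ = sin := funext hx₂
  exact ⟨exp_neg_mul_cos_solves, sin_solves, integral_dampingCoeff.symm ▸ pi_pos,
    not_tendsto_sin_atTop⟩
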